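/- The inclusions =ˢ ⊆ = ⊆ =ʷ hold among the strong equality, the absolute equality, and the weak equality on π-processes, and both inclusions are strict. -/

import Mathlib

set_option linter.unusedVariables false

/-! Core formalization of the π-calculus with name dichotomy.
Names are natural numbers; name variables are natural numbers (kept disjoint
via the sum-like type `NV`). -/

abbrev Name := ℕ

/-- Names and name variables. -/
inductive NV : Type
  | nm : Name → NV
  | vr : ℕ → NV
  deriving DecidableEq

/-- π-terms.  Input and output choices have a finite index set `Fin k`. -/
inductive Term : Type
  | nil : Term
  | inp : NV → ℕ → (k : ℕ) → (Fin k → Term) → Term          -- Σ_{i∈I} n(x).T_i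
  | out : NV → (k : ℕ) → (Fin k → NV) → (Fin k → Term) → Term -- Σ_{i∈I} n̄ m_i.T_i
  | par : Term → Term → Term
  | res : Name → Term → Term
  | mat : NV → NV → Term → Term
  | mis : NV → NV → Term → Term
  | repInp : NV → ℕ → Term → Term                             -- !n(x).T
  | repOut : NV → NV → Term → Term                            -- !n̄m.T

namespace NV

/-- Apply a map on variables. -/
def sub (σ : ℕ → NV) : NV → NV
  | nm a => nm a
  | vr x => σ x

/-- Apply a map on names. -/
def ren (α : Name → Name) : NV → NV
  | nm a => nm (α a)
  | vr x => vr x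

def vars : NV → Set ℕ
  | nm _ => ∅
  | vr x => {x}

def names : NV → Set Name
  | nm a => {a}
  | vr _ => ∅

end NV

namespace Term

/-- Apply a substitution (a map from name variables to names-or-variables),
    not substituting bound occurrences. -/
def applyVar (σ : ℕ → NV) : Term → Term
  | nil => nil
  | inp n x k Ts => inp (n.sub σ) x k (fun i => (Ts i).applyVar (Function.update σ x (NV.vr x)))
  | out n k ms Ts => out (n.sub σ) k (fun i => (ms i).sub σ) (fun i => (Ts i).applyVar σ)
  | par S T => par (S.applyVar σ) (T.applyVar σ)
  | res c T => res c (T.applyVar σ)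
  | mat p q T => mat (p.sub σ) (q.sub σ) (T.applyVar σ)
  | mis p q T => mis (p.sub σ) (q.sub σ) (T.applyVar σ)
  | repInp n x T => repInp (n.sub σ) x (T.applyVar (Function.update σ x (NV.vr x)))
  | repOut n m T => repOut (n.sub σ) (m.sub σ) (T.applyVar σ)

/-- Substitute the single name `c` for the name variable `x`: `T{c/x}`. -/
def subst1 (x : ℕ) (c : Name) (T : Term) : Term :=
  T.applyVar (fun y => if y = x then NV.nm c else NV.vr y)

/-- Apply an assignment (a total map from name variables to names). -/
def assign (ρ : ℕ → Name) (T : Term) : Term :=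
  T.applyVar (fun x => NV.nm (ρ x))

/-- Apply a renaming to all names of a term. -/
def applyName (α : Name → Name) : Term → Term
  | nil => nil
  | inp n x k Ts => inp (n.ren α) x k (fun i => (Ts i).applyName α)
  | out n k ms Ts => out (n.ren α) k (fun i => (ms i).ren α) (fun i => (Ts i).applyName α)
  | par S T => par (S.applyName α) (T.applyName α)
  | res c T => res (α c) (T.applyName α)
  | mat p q T => mat (p.ren α) (q.ren α) (T.applyName α)
  | mis p q T => mis (p.ren α) (q.ren α) (T.applyName α)
  | repInp n x T => repInp (n.ren α) x (T.applyName α)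
  | repOut n m T => repOut (n.ren α) (m.ren α) (T.applyName α)

/-- Free name variables. -/
def fvar : Term → Set ℕ
  | nil => ∅
  | inp n x k Ts => n.vars ∪ ((⋃ i, (Ts i).fvar) \ {x})
  | out n k ms Ts => n.vars ∪ (⋃ i, (ms i).vars ∪ (Ts i).fvar)
  | par S T => S.fvar ∪ T.fvar
  | res _ T => T.fvar
  | mat p q T => p.vars ∪ q.vars ∪ T.fvar
  | mis p q T => p.vars ∪ q.vars ∪ T.fvar
  | repInp n x T => n.vars ∪ (T.fvar \ {x})
  | repOut n m T => n.vars ∪ m.vars ∪ T.fvar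

/-- Global (non-local) names. -/
def gname : Term → Set Name
  | nil => ∅
  | inp n _ k Ts => n.names ∪ (⋃ i, (Ts i).gname)
  | out n k ms Ts => n.names ∪ (⋃ i, (ms i).names ∪ (Ts i).gname)
  | par S T => S.gname ∪ T.gname
  | res c T => T.gname \ {c}
  | mat p q T => p.names ∪ q.names ∪ T.gname
  | mis p q T => p.names ∪ q.names ∪ T.gname
  | repInp n _ T => n.names ∪ T.gname
  | repOut n m T => n.names ∪ m.names ∪ T.gname

end Term

/-- A π-process is a closed π-term. -/
def Closed (P : Term) : Prop := P.fvar = ∅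

def IsProc (P : Term) : Prop := Closed P

/-- Labels (external actions). -/
inductive Label : Type
  | inp : Name → Name → Label      -- ab
  | out : Name → Name → Label      -- āb
  | bout : Name → Name → Label     -- ā(c)
  deriving DecidableEq

def Label.names : Label → Set Name
  | .inp a b => {a, b}
  | .out a b => {a, b}
  | .bout a c => {a, c}

def Label.ren (α : Name → Name) : Label → Label
  | .inp a b => .inp (α a) (α b)
  | .out a b => .out (α a) (α b)
  | .bout a c => .bout (α a) (α c)

/-- Actions: internal action τ or a label. -/
inductive Act : Type
  | tau : Act
  | lab : Label → Act

def Act.names : Act → Set Name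
  | .tau => ∅
  | .lab ℓ => ℓ.names

def Act.ren (α : Name → Name) : Act → Act
  | .tau => .tau
  | .lab ℓ => .lab (ℓ.ren α)

/-- The labelled transition system of the π-calculus. -/
inductive Step : Term → Act → Term → Prop
  | inp {a : Name} {x : ℕ} {k : ℕ} {Ts : Fin k → Term} (i : Fin k) (c : Name) :
      Step (.inp (.nm a) x k Ts) (.lab (.inp a c)) ((Ts i).subst1 x c)
  | out {a : Name} {k : ℕ} {ms : Fin k → NV} {Ts : Fin k → Term} (i : Fin k) {c : Name}
      (h : ms i = .nm c) :
      Step (.out (.nm a) k ms Ts) (.lab (.out a c)) (Ts i)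
  | parR {S T T' : Term} {μ : Act} :
      Step T μ T' → Step (.par S T) μ (.par S T')
  | parL {S S' T : Term} {μ : Act} :
      Step S μ S' → Step (.par S T) μ (.par S' T)
  | commL {S S' T T' : Term} {a b : Name} :
      Step S (.lab (.inp a b)) S' → Step T (.lab (.out a b)) T' →
      Step (.par S T) .tau (.par S' T')
  | commR {S S' T T' : Term} {a b : Name} :
      Step S (.lab (.out a b)) S' → Step T (.lab (.inp a b)) T' →
      Step (.par S T) .tau (.par S' T')
  | closeL {S S' T T' : Term} {a c : Name} :
      Step S (.lab (.inp a c)) S' → Step T (.lab (.bout a c)) T' →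
      Step (.par S T) .tau (.res c (.par S' T'))
  | closeR {S S' T T' : Term} {a c : Name} :
      Step S (.lab (.bout a c)) S' → Step T (.lab (.inp a c)) T' →
      Step (.par S T) .tau (.res c (.par S' T'))
  | open_ {T T' : Term} {a c : Name} :
      Step T (.lab (.out a c)) T' → Step (.res c T) (.lab (.bout a c)) T'
  | resStep {T T' : Term} {μ : Act} {c : Name} :
      Step T μ T' → c ∉ μ.names → Step (.res c T) μ (.res c T')
  | matStep {T T' : Term} {μ : Act} {a : Name} :
      Step T μ T' → Step (.mat (.nm a) (.nm a) T) μ T'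
  | misStep {T T' : Term} {μ : Act} {a b : Name} :
      a ≠ b → Step T μ T' → Step (.mis (.nm a) (.nm b) T) μ T'
  | repOutStep {a b : Name} {T : Term} :
      Step (.repOut (.nm a) (.nm b) T) (.lab (.out a b)) (.par T (.repOut (.nm a) (.nm b) T))
  | repInpStep {a : Name} {x : ℕ} {T : Term} (b : Name) :
      Step (.repInp (.nm a) x T) (.lab (.inp a b)) (.par (T.subst1 x b) (.repInp (.nm a) x T))

/-- Internal action. -/
def Tau (P Q : Term) : Prop := Step P .tau Q

/-- `P ⟹ Q` : reflexive and transitive closure of τ. -/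
def WeakTau : Term → Term → Prop := Relation.ReflTransGen Tau

/-- `P ⇓` : observability. -/
def Obs (P : Term) : Prop := ∃ P' ℓ P'', WeakTau P P' ∧ Step P' (.lab ℓ) P''

abbrev PRel : Type := Term → Term → Prop

def OnProc (R : PRel) : Prop := ∀ P Q, R P Q → IsProc P ∧ IsProc Q

def ReflProc (R : PRel) : Prop := ∀ P, IsProc P → R P P

def Equipollent (R : PRel) : Prop := ∀ P Q, R P Q → (Obs P ↔ Obs Q)

def Extensional (R : PRel) : Prop :=
  (∀ L M P Q, R L M → R P Q → R (.par L P) (.par M Q)) ∧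
  (∀ P Q c, R P Q → R (.res c P) (.res c Q))

/-- An infinite τ-sequence. -/
def TauSeq (f : ℕ → Term) : Prop := ∀ n, Tau (f n) (f (n + 1))

/-- `P —τ→⟹ P'`. -/
def TauWeak (P P' : Term) : Prop := ∃ P₀, Tau P P₀ ∧ WeakTau P₀ P'

def Codivergent (R : PRel) : Prop := ∀ P Q, R P Q →
  ((∀ f : ℕ → Term, f 0 = Q → TauSeq f →
      ∃ k, 1 ≤ k ∧ ∃ P', TauWeak P P' ∧ R P' (f k)) ∧
   (∀ f : ℕ → Term, f 0 = P → TauSeq f →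
      ∃ k, 1 ≤ k ∧ ∃ Q', TauWeak Q Q' ∧ R Q' (f k)))

/-- Branching-style bisimulation. -/
def Bisim (R : PRel) : Prop := ∀ P Q, R P Q →
  ((∀ Q', Tau Q Q' →
      (∃ P', WeakTau P P' ∧ R P' Q ∧ R P' Q') ∨
      (∃ P'' P', WeakTau P P'' ∧ R P'' Q ∧ Tau P'' P' ∧ R P' Q')) ∧
   (∀ P', Tau P P' →
      (∃ Q', WeakTau Q Q' ∧ R P Q' ∧ R P' Q') ∨
      (∃ Q'' Q', WeakTau Q Q'' ∧ R P Q'' ∧ Tau Q'' Q' ∧ R P' Q')))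

/-- A relation qualifying for the absolute equality. -/
def GoodAbs (R : PRel) : Prop :=
  OnProc R ∧ ReflProc R ∧ Equipollent R ∧ Extensional R ∧ Codivergent R ∧ Bisim R

/-- The absolute equality: the largest reflexive, equipollent, extensional,
codivergent bisimulation on π-processes. -/
def AbsEq (P Q : Term) : Prop := ∃ R : PRel, GoodAbs R ∧ R P Q

/-- Weak bisimulation (Milner style). -/
def WeakBisim (R : PRel) : Prop := ∀ P Q, R P Q →
  ((∀ Q', Tau Q Q' → ∃ P', WeakTau P P' ∧ R P' Q') ∧
   (∀ P', Tau P P' → ∃ Q', WeakTau Q Q' ∧ R P' Q'))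

/-- Strong bisimulation. -/
def StrongBisim (R : PRel) : Prop :=
  (∀ P Q, R P Q → R Q P) ∧
  (∀ P Q Q', R P Q → Tau Q Q' → ∃ P', Tau P P' ∧ R P' Q')

def GoodStrong (R : PRel) : Prop :=
  OnProc R ∧ ReflProc R ∧ Equipollent R ∧ Extensional R ∧ StrongBisim R

/-- The strong equality =ˢ : the largest reflexive, equipollent, extensional
strong bisimulation on π-processes. -/
def StrongEq (P Q : Term) : Prop := ∃ R : PRel, GoodStrong R ∧ R P Q

def GoodWeak (R : PRel) : Prop :=
  OnProc R ∧ ReflProc R ∧ Equipollent R ∧ Extensional R ∧ Codivergent R ∧ WeakBisim R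

/-- The weak equality =ʷ : the largest reflexive, equipollent, extensional,
codivergent weak bisimulation on π-processes. -/
def WeakEq (P Q : Term) : Prop := ∃ R : PRel, GoodWeak R ∧ R P Q

/-!
A strong bisimulation answers every τ-step by exactly one τ-step, so it is a codivergent
bisimulation, and every bisimulation is a weak bisimulation; this gives the two inclusions.

`0` and `(0)(0̄1 | 0(x))` are absolutely equal: in the congruence they generate, the single internal
step of the right-hand side is matched by `0` standing still, and weighting each pair by the number
of such pending steps shows that nobody stutters forever. They are not strongly equal, since `0`
cannot move.

`p = (ū3+ū4+ū5) | !u(x).[x=3]ū4` and `q = (ū3+ū5) | !u(x).[x=3]ū4` are weakly equal: `q` mimics the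
output `ū4` by first sending `3` to the replicator, and the communication of `4` to the replicator
by communicating `5`. They are not absolutely equal. Put both next to the tester `u(x).[x=4]Ω`.
Then `p` moves to a state that diverges forever, and a codivergent relation never relates a
terminating process to a divergent one, so `q` has to reach a divergent state. The only way there
is through the state where `3` went to the replicator, and the branching condition then relates
that state to `p | u(x).[x=4]Ω`. But it can no longer send `3` to the tester and stop.
-/

open Relation Set

theorem NV.vars_sub_subset {σ : ℕ → NV} {n : NV} {V : Set ℕ}
    (h : ∀ y ∈ n.vars, (σ y).vars ⊆ V) : (n.sub σ).vars ⊆ V := by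
  cases n <;> simp_all [NV.sub, NV.vars]

theorem NV.vars_update_subset {σ : ℕ → NV} {x y : ℕ} {V : Set ℕ} (h : y ≠ x → (σ y).vars ⊆ V) :
    (Function.update σ x (.vr x) y).vars ⊆ insert x V := by
  by_cases hy : y = x
  · subst hy; simp [NV.vars]
  · rw [Function.update_of_ne hy]; exact (h hy).trans (subset_insert x V)

theorem Term.fvar_applyVar_subset {T : Term} {σ : ℕ → NV} {V : Set ℕ}
    (h : ∀ y ∈ T.fvar, (σ y).vars ⊆ V) : (T.applyVar σ).fvar ⊆ V := by
  induction T generalizing σ V with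
  | nil => exact empty_subset V
  | inp n x k Ts ih =>
    refine union_subset (NV.vars_sub_subset fun y hy => h y (.inl hy)) (sdiff_subset_iff.2 ?_)
    refine iUnion_subset fun i => ih i fun y hy => ?_
    exact NV.vars_update_subset fun hyx => h y (.inr ⟨mem_iUnion.2 ⟨i, hy⟩, hyx⟩)
  | out n k ms Ts ih =>
    refine union_subset (NV.vars_sub_subset fun y hy => h y (.inl hy)) (iUnion_subset fun i => ?_)
    exact union_subset (NV.vars_sub_subset fun y hy => h y (.inr (mem_iUnion.2 ⟨i, .inl hy⟩)))
      (ih i fun y hy => h y (.inr (mem_iUnion.2 ⟨i, .inr hy⟩)))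
  | par S T ihS ihT =>
    exact union_subset (ihS fun y hy => h y (.inl hy)) (ihT fun y hy => h y (.inr hy))
  | res c T ih => exact ih h
  | mat p q T ih | mis p q T ih | repOut p q T ih =>
    exact union_subset (union_subset (NV.vars_sub_subset fun y hy => h y (.inl (.inl hy)))
      (NV.vars_sub_subset fun y hy => h y (.inl (.inr hy)))) (ih fun y hy => h y (.inr hy))
  | repInp n x T ih =>
    refine union_subset (NV.vars_sub_subset fun y hy => h y (.inl hy)) (sdiff_subset_iff.2 ?_)
    exact ih fun y hy => NV.vars_update_subset fun hyx => h y (.inr ⟨hy, hyx⟩)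

theorem closed_subst1 {T : Term} {x : ℕ} (c : Name) (h : T.fvar ⊆ {x}) : Closed (T.subst1 x c) := by
  refine subset_empty_iff.1 (Term.fvar_applyVar_subset fun y hy => ?_)
  obtain rfl := h hy
  simp [NV.vars]

theorem closed_par_iff {S T : Term} : Closed (.par S T) ↔ Closed S ∧ Closed T := by
  simp [Closed, Term.fvar]

theorem Step.closed {P P' : Term} {μ : Act} (h : Step P μ P') (hP : Closed P) : Closed P' := by
  induction h with
  | inp i c =>
    simp only [Closed, Term.fvar, NV.vars, empty_union, Set.sdiff_eq_empty, iUnion_subset_iff] at hP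
    exact closed_subst1 c (hP i)
  | out i _ =>
    simp only [Closed, Term.fvar, union_empty_iff, iUnion_eq_empty] at hP
    exact (hP.2 i).2
  | repInpStep b =>
    simp only [Closed, Term.fvar, NV.vars, empty_union, Set.sdiff_eq_empty] at hP
    refine closed_par_iff.2 ⟨closed_subst1 b hP, ?_⟩
    simpa [Closed, Term.fvar, NV.vars, Set.sdiff_eq_empty] using hP
  | _ => simp_all [Closed, Term.fvar]

theorem Tau.res {A A' : Term} (c : Name) (h : Tau A A') : Tau (.res c A) (.res c A') :=
  Step.resStep h (by simp [Act.names])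

namespace WeakTau

theorem refl (P : Term) : WeakTau P P := ReflTransGen.refl

theorem single {P Q : Term} (h : Tau P Q) : WeakTau P Q := ReflTransGen.single h

theorem tail {P Q R : Term} (h : WeakTau P Q) (h' : Tau Q R) : WeakTau P R := ReflTransGen.tail h h'

theorem par_left {A A' : Term} (B : Term) (h : WeakTau A A') : WeakTau (.par A B) (.par A' B) :=
  ReflTransGen.lift (Term.par · B) (fun _ _ => Step.parL) _ _ h

theorem par_right (A : Term) {B B' : Term} (h : WeakTau B B') : WeakTau (.par A B) (.par A B') :=
  ReflTransGen.lift (Term.par A) (fun _ _ => Step.parR) _ _ h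

theorem res (c : Name) {A A' : Term} (h : WeakTau A A') : WeakTau (.res c A) (.res c A') :=
  ReflTransGen.lift (Term.res c) (fun _ _ => Tau.res c) _ _ h

end WeakTau

theorem TauWeak.of_transGen {P Q : Term} (h : TransGen Tau P Q) : TauWeak P Q :=
  TransGen.head'_iff.1 h

theorem TauWeak.weakTau {P Q : Term} : TauWeak P Q → WeakTau P Q
  | ⟨_, h, h'⟩ => ReflTransGen.head h h'

theorem Obs.of_weakTau {P P' : Term} (h : WeakTau P P') : Obs P' → Obs P
  | ⟨P₁, ℓ, P₂, h₁, h₂⟩ => ⟨P₁, ℓ, P₂, h.trans h₁, h₂⟩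

theorem Obs.of_step {P P' : Term} {ℓ : Label} (h : Step P (.lab ℓ) P') : Obs P :=
  ⟨P, ℓ, P', .refl P, h⟩

theorem Obs.transfer {R : PRel}
    (hτ : ∀ S T T', R S T → Tau T T' → ∃ S', WeakTau S S' ∧ R S' T')
    (hℓ : ∀ S T ℓ T', R S T → Step T (.lab ℓ) T' → Obs S) {S T : Term} (h : R S T) :
    Obs T → Obs S := by
  rintro ⟨T₁, ℓ, T₂, hT, hℓT⟩
  induction hT using ReflTransGen.head_induction_on generalizing S with
  | refl => exact hℓ _ _ _ _ h hℓT
  | head hτT _ ih =>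
    obtain ⟨S', hS', h'⟩ := hτ _ _ _ h hτT
    exact .of_weakTau hS' (ih h')

theorem equipollent_of_transfer {R : PRel} (hsymm : ∀ S T, R S T → R T S)
    (hτ : ∀ S T T', R S T → Tau T T' → ∃ S', WeakTau S S' ∧ R S' T')
    (hℓ : ∀ S T ℓ T', R S T → Step T (.lab ℓ) T' → Obs S) : Equipollent R :=
  fun S T h => ⟨Obs.transfer hτ hℓ (hsymm S T h), Obs.transfer hτ hℓ h⟩

theorem Bisim.weakBisim {R : PRel} (h : Bisim R) : WeakBisim R := by
  intro P Q hPQ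
  refine ⟨fun Q' hQ' => ?_, fun P' hP' => ?_⟩
  · rcases (h P Q hPQ).1 Q' hQ' with ⟨P', hP', -, hR⟩ | ⟨P'', P', hP'', -, hτ, hR⟩
    exacts [⟨P', hP', hR⟩, ⟨P', hP''.tail hτ, hR⟩]
  · rcases (h P Q hPQ).2 P' hP' with ⟨Q', hQ', -, hR⟩ | ⟨Q'', Q', hQ'', -, hτ, hR⟩
    exacts [⟨Q', hQ', hR⟩, ⟨Q', hQ''.tail hτ, hR⟩]

theorem StrongBisim.bisim {R : PRel} (h : StrongBisim R) : Bisim R := by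
  intro P Q hPQ
  refine ⟨fun Q' hQ' => ?_, fun P' hP' => ?_⟩
  · obtain ⟨P', hP', hR⟩ := h.2 P Q Q' hPQ hQ'
    exact .inr ⟨P, P', .refl P, hPQ, hP', hR⟩
  · obtain ⟨Q', hQ', hR⟩ := h.2 Q P P' (h.1 P Q hPQ) hP'
    exact .inr ⟨Q, Q', .refl Q, hPQ, hQ', h.1 _ _ hR⟩

theorem StrongBisim.codivergent {R : PRel} (h : StrongBisim R) : Codivergent R := by
  intro P Q hPQ
  refine ⟨fun f hf hτ => ?_, fun f hf hτ => ?_⟩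
  · obtain ⟨P', hP', hR⟩ := h.2 P Q (f 1) hPQ (hf ▸ hτ 0)
    exact ⟨1, le_rfl, P', ⟨P', hP', .refl P'⟩, hR⟩
  · obtain ⟨Q', hQ', hR⟩ := h.2 Q P (f 1) (h.1 P Q hPQ) (hf ▸ hτ 0)
    exact ⟨1, le_rfl, Q', ⟨Q', hQ', .refl Q'⟩, hR⟩

theorem StrongEq.absEq {P Q : Term} : StrongEq P Q → AbsEq P Q
  | ⟨R, ⟨hp, hr, he, hx, hs⟩, hPQ⟩ => ⟨R, ⟨hp, hr, he, hx, hs.codivergent, hs.bisim⟩, hPQ⟩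

theorem AbsEq.weakEq {P Q : Term} : AbsEq P Q → WeakEq P Q
  | ⟨R, ⟨hp, hr, he, hx, hc, hb⟩, hPQ⟩ => ⟨R, ⟨hp, hr, he, hx, hc, hb.weakBisim⟩, hPQ⟩

theorem step_nil {μ : Act} {Z : Term} : ¬ Step .nil μ Z := nofun

-- `(0)(0̄1 | 0(x))`; the message `1` is not the restricted name, so the output cannot be extruded.
abbrev tauNil : Term :=
  .res 0 (.par (.out (.nm 0) 1 (fun _ => .nm 1) (fun _ => .nil)) (.inp (.nm 0) 0 1 (fun _ => .nil)))

abbrev tauNilDone : Term := .res 0 (.par .nil .nil)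

theorem tau_tauNil : Tau tauNil tauNilDone :=
  Tau.res 0 (Step.commR (Step.out 0 rfl) (Step.inp 0 1))

theorem step_tauNil {μ : Act} {Z : Term} (h : Step tauNil μ Z) : μ = .tau ∧ Z = tauNilDone := by
  cases h with
  | open_ h => cases h with
    | parL h => cases h with | out _ h => simp at h
    | parR h => cases h
  | resStep h hc => cases h with
    | parL h => cases h; simp [Act.names, Label.names] at hc
    | parR h => cases h; simp [Act.names, Label.names] at hc
    | commR h₁ h₂ => cases h₁; cases h₂; exact ⟨rfl, rfl⟩
    | commL h₁ | closeL h₁ | closeR h₁ => cases h₁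

theorem step_tauNilDone {μ : Act} {Z : Term} : ¬ Step tauNilDone μ Z := by
  intro h
  cases h with
  | open_ h | resStep h => cases h <;> contradiction

-- The index counts the pending internal steps of the `tauNil` components: it bounds how long one
-- side may stutter, which is what makes the relation codivergent.
inductive TauNilCong : ℕ → Term → Term → Prop
  | refl {P : Term} : IsProc P → TauNilCong 0 P P
  | symm {n : ℕ} {P Q : Term} : TauNilCong n P Q → TauNilCong n Q P
  | tauNil : TauNilCong 1 .nil tauNil
  | tauNilDone : TauNilCong 0 .nil tauNilDone
  | par {m n : ℕ} {L M P Q : Term} :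
      TauNilCong m L M → TauNilCong n P Q → TauNilCong (m + n) (.par L P) (.par M Q)
  | res {n : ℕ} {P Q : Term} (c : Name) : TauNilCong n P Q → TauNilCong n (.res c P) (.res c Q)

def TauNilRel (S T : Term) : Prop := ∃ n, TauNilCong n S T

theorem TauNilRel.par {L M P Q : Term} :
    TauNilRel L M → TauNilRel P Q → TauNilRel (.par L P) (.par M Q)
  | ⟨_, h₁⟩, ⟨_, h₂⟩ => ⟨_, h₁.par h₂⟩

theorem TauNilRel.res {P Q : Term} (c : Name) : TauNilRel P Q → TauNilRel (.res c P) (.res c Q)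
  | ⟨_, h⟩ => ⟨_, h.res c⟩

theorem TauNilRel.symm {P Q : Term} : TauNilRel P Q → TauNilRel Q P
  | ⟨_, h⟩ => ⟨_, h.symm⟩

namespace TauNilCong

def Answers (n : ℕ) (S T : Term) : Prop :=
  (∀ T', Tau T T' → (∃ S', Tau S S' ∧ TauNilRel S' T') ∨ ∃ m < n, TauNilCong m S T') ∧
  ∀ ℓ T', Step T (.lab ℓ) T' → ∃ S', Step S (.lab ℓ) S' ∧ TauNilRel S' T'

theorem answers_refl (n : ℕ) {P : Term} (hP : IsProc P) : Answers n P P :=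
  ⟨fun P' h => .inl ⟨P', h, 0, refl (h.closed hP)⟩, fun _ P' h => ⟨P', h, 0, refl (h.closed hP)⟩⟩

theorem answers_par {m n : ℕ} {L M P Q : Term} (hLM : TauNilCong m L M) (hPQ : TauNilCong n P Q)
    (h₁ : Answers m L M) (h₂ : Answers n P Q) : Answers (m + n) (.par L P) (.par M Q) := by
  obtain ⟨τ₁, ℓ₁⟩ := h₁
  obtain ⟨τ₂, ℓ₂⟩ := h₂
  refine ⟨fun T' hT' => ?_, fun ℓ T' hT' => ?_⟩
  · cases hT' with
    | parR h =>
      rcases τ₂ _ h with ⟨P', hP', hR⟩ | ⟨k, hk, hR⟩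
      · exact .inl ⟨_, .parR hP', TauNilRel.par ⟨m, hLM⟩ hR⟩
      · exact .inr ⟨m + k, by omega, hLM.par hR⟩
    | parL h =>
      rcases τ₁ _ h with ⟨L', hL', hR⟩ | ⟨k, hk, hR⟩
      · exact .inl ⟨_, .parL hL', TauNilRel.par hR ⟨n, hPQ⟩⟩
      · exact .inr ⟨k + n, by omega, hR.par hPQ⟩
    | commL h₁ h₂ | commR h₁ h₂ =>
      obtain ⟨L', hL', hR₁⟩ := ℓ₁ _ _ h₁
      obtain ⟨P', hP', hR₂⟩ := ℓ₂ _ _ h₂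
      first
      | exact .inl ⟨_, .commL hL' hP', hR₁.par hR₂⟩
      | exact .inl ⟨_, .commR hL' hP', hR₁.par hR₂⟩
    | closeL h₁ h₂ | closeR h₁ h₂ =>
      obtain ⟨L', hL', hR₁⟩ := ℓ₁ _ _ h₁
      obtain ⟨P', hP', hR₂⟩ := ℓ₂ _ _ h₂
      first
      | exact .inl ⟨_, .closeL hL' hP', (hR₁.par hR₂).res _⟩
      | exact .inl ⟨_, .closeR hL' hP', (hR₁.par hR₂).res _⟩
  · cases hT' with
    | parR h =>
      obtain ⟨P', hP', hR⟩ := ℓ₂ _ _ h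
      exact ⟨_, .parR hP', TauNilRel.par ⟨m, hLM⟩ hR⟩
    | parL h =>
      obtain ⟨L', hL', hR⟩ := ℓ₁ _ _ h
      exact ⟨_, .parL hL', TauNilRel.par hR ⟨n, hPQ⟩⟩

theorem answers_res {n : ℕ} {P Q : Term} (c : Name) (h : Answers n P Q) :
    Answers n (.res c P) (.res c Q) := by
  obtain ⟨hτ, hℓ⟩ := h
  refine ⟨fun T' hT' => ?_, fun ℓ T' hT' => ?_⟩
  · cases hT' with
    | resStep h =>
      rcases hτ _ h with ⟨P', hP', hR⟩ | ⟨k, hk, hR⟩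
      exacts [.inl ⟨_, hP'.res c, hR.res c⟩, .inr ⟨k, hk, hR.res c⟩]
  · cases hT' with
    | resStep h hc =>
      obtain ⟨P', hP', hR⟩ := hℓ _ _ h
      exact ⟨_, .resStep hP' hc, hR.res c⟩
    | open_ h =>
      obtain ⟨P', hP', hR⟩ := hℓ _ _ h
      exact ⟨_, .open_ hP', hR⟩

theorem answers {n : ℕ} {S T : Term} (h : TauNilCong n S T) : Answers n S T ∧ Answers n T S := by
  induction h with
  | refl hP => exact ⟨answers_refl _ hP, answers_refl _ hP⟩
  | symm _ ih => exact ih.symm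
  | tauNil =>
    refine ⟨⟨fun T' hT' => ?_, fun ℓ T' hT' => ?_⟩, ⟨nofun, nofun⟩⟩
    · exact .inr ⟨0, zero_lt_one, (step_tauNil hT').2 ▸ tauNilDone⟩
    · cases (step_tauNil hT').1
  | tauNilDone =>
    exact ⟨⟨fun _ h => absurd h step_tauNilDone, fun _ _ h => absurd h step_tauNilDone⟩,
      ⟨nofun, nofun⟩⟩
  | par hLM hPQ ih₁ ih₂ =>
    exact ⟨answers_par hLM hPQ ih₁.1 ih₂.1, answers_par hLM.symm hPQ.symm ih₁.2 ih₂.2⟩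
  | res c _ ih => exact ⟨answers_res c ih.1, answers_res c ih.2⟩

theorem answers_tauSeq (n : ℕ) {S T : Term} (h : TauNilCong n S T) (f : ℕ → Term) (hf : f 0 = T)
    (hτ : TauSeq f) : ∃ k, 1 ≤ k ∧ ∃ S', TauWeak S S' ∧ TauNilRel S' (f k) := by
  induction n using Nat.strong_induction_on generalizing T f with
  | _ n ih =>
    rcases (answers h).1.1 (f 1) (hf ▸ hτ 0) with ⟨S', hS', hR⟩ | ⟨m, hm, hR⟩
    · exact ⟨1, le_rfl, S', ⟨S', hS', .refl S'⟩, hR⟩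
    · obtain ⟨k, -, S', hS', hR'⟩ := ih m hm hR (f ∘ (· + 1)) rfl fun i => hτ (i + 1)
      exact ⟨k + 1, by omega, S', hS', hR'⟩

theorem goodAbs : GoodAbs TauNilRel := by
  have hτ : ∀ S T T', TauNilRel S T → Tau T T' → ∃ S', WeakTau S S' ∧ TauNilRel S' T' := by
    rintro S T T' ⟨n, h⟩ hT
    rcases (answers h).1.1 T' hT with ⟨S', hS', hR⟩ | ⟨m, -, hR⟩
    exacts [⟨S', .single hS', hR⟩, ⟨S, .refl S, m, hR⟩]
  have hℓ : ∀ S T ℓ T', TauNilRel S T → Step T (.lab ℓ) T' → Obs S := by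
    rintro S T ℓ T' ⟨n, h⟩ hT
    obtain ⟨S', hS', -⟩ := (answers h).1.2 ℓ T' hT
    exact .of_step hS'
  refine ⟨?_, fun P hP => ⟨0, refl hP⟩, equipollent_of_transfer (fun _ _ => TauNilRel.symm) hτ hℓ,
    ⟨fun _ _ _ _ => TauNilRel.par, fun _ _ c => TauNilRel.res c⟩, ?_, ?_⟩
  · rintro P Q ⟨n, h⟩
    induction h with
    | refl hP => exact ⟨hP, hP⟩
    | symm _ ih => exact ih.symm
    | tauNil | tauNilDone => constructor <;> simp [IsProc, Closed, Term.fvar, NV.vars]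
    | par _ _ ih₁ ih₂ => exact ⟨closed_par_iff.2 ⟨ih₁.1, ih₂.1⟩, closed_par_iff.2 ⟨ih₁.2, ih₂.2⟩⟩
    | res c _ ih => exact ih
  · rintro P Q ⟨n, h⟩
    exact ⟨answers_tauSeq n h, fun f hf hτ => answers_tauSeq n h.symm f hf hτ⟩
  · rintro P Q ⟨n, h⟩
    refine ⟨fun Q' hQ' => ?_, fun P' hP' => ?_⟩
    · rcases (answers h).1.1 Q' hQ' with ⟨P', hP', hR⟩ | ⟨m, -, hR⟩
      exacts [.inr ⟨P, P', .refl P, ⟨n, h⟩, hP', hR⟩, .inl ⟨P, .refl P, ⟨n, h⟩, m, hR⟩]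
    · rcases (answers h).2.1 P' hP' with ⟨Q', hQ', hR⟩ | ⟨m, -, hR⟩
      exacts [.inr ⟨Q, Q', .refl Q, ⟨n, h⟩, hQ', hR.symm⟩, .inl ⟨Q, .refl Q, ⟨n, h⟩, m, hR.symm⟩]

end TauNilCong

theorem absEq_nil_tauNil : AbsEq .nil tauNil := ⟨_, TauNilCong.goodAbs, 1, .tauNil⟩

theorem not_strongEq_nil_tauNil : ¬ StrongEq .nil tauNil := by
  rintro ⟨R, ⟨-, -, -, -, -, hR⟩, h⟩
  obtain ⟨_, h, -⟩ := hR _ _ _ h tau_tauNil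
  exact step_nil h

-- The channel `u` of the paper is the name `1`.
abbrev outFour : Term := .out (.nm 1) 1 (fun _ => .nm 4) (fun _ => .nil)

abbrev guardedFour (b : Name) : Term := .mat (.nm b) (.nm 3) outFour

abbrev replicator : Term := .repInp (.nm 1) 0 (.mat (.vr 0) (.nm 3) outFour)

abbrev sum345 : Term := .out (.nm 1) 3 (fun i => .nm (3 + i.val)) (fun _ => .nil)

abbrev sum35 : Term := .out (.nm 1) 2 (fun i => .nm (3 + 2 * i.val)) (fun _ => .nil)

abbrev procP : Term := .par sum345 replicator

abbrev procQ : Term := .par sum35 replicator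

theorem step_replicator {μ : Act} {Z : Term} (h : Step replicator μ Z) :
    ∃ b, μ = .lab (.inp 1 b) ∧ Z = .par (guardedFour b) replicator := by
  cases h with | repInpStep b => exact ⟨b, rfl, rfl⟩

theorem step_guardedFour {b : Name} {μ : Act} {Z : Term} (h : Step (guardedFour b) μ Z) :
    b = 3 ∧ μ = .lab (.out 1 4) ∧ Z = .nil := by
  cases h with | matStep h => cases h with | out i h => cases h; exact ⟨rfl, rfl, rfl⟩

theorem step_sum35 {μ : Act} {Z : Term} (h : Step sum35 μ Z) :
    Z = .nil ∧ ∃ b, (b = 3 ∨ b = 5) ∧ μ = .lab (.out 1 b) := by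
  cases h with | out i h => fin_cases i <;> cases h <;> simp

theorem step_sum345 {μ : Act} {Z : Term} (h : Step sum345 μ Z) :
    μ = .lab (.out 1 4) ∨ Step sum35 μ Z := by
  cases h with
  | out i h =>
    fin_cases i <;> cases h
    exacts [.inr (Step.out 0 rfl), .inl rfl, .inr (Step.out 1 rfl)]

theorem Step.sum345_of_sum35 {μ : Act} {Z : Term} (h : Step sum35 μ Z) : Step sum345 μ Z := by
  cases h with
  | out i h => fin_cases i <;> cases h; exacts [Step.out 0 rfl, Step.out 2 rfl]

inductive Junk : Term → Prop
  | nil : Junk .nil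
  | guarded (b : Name) : Junk (guardedFour b)

inductive Replicating : Term → Prop
  | replicator : Replicating replicator
  | par {J Y : Term} : Junk J → Replicating Y → Replicating (.par J Y)

theorem Junk.closed {J : Term} (h : Junk J) : Closed J := by
  cases h <;> simp [Closed, Term.fvar, NV.vars]

theorem Junk.step {J : Term} (h : Junk J) {μ : Act} {Z : Term} (hs : Step J μ Z) :
    μ = .lab (.out 1 4) ∧ Z = .nil := by
  cases h with
  | nil => cases hs
  | guarded b => exact (step_guardedFour hs).2

theorem Replicating.closed {Y : Term} (h : Replicating Y) : Closed Y := by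
  induction h with
  | replicator => simp [Closed, Term.fvar, NV.vars]
  | par hJ _ ih => exact closed_par_iff.2 ⟨hJ.closed, ih⟩

theorem Replicating.step {Y : Term} (h : Replicating Y) {μ : Act} {Y' : Term} (hs : Step Y μ Y') :
    Replicating Y' := by
  induction h generalizing μ Y' with
  | replicator =>
    obtain ⟨b, -, rfl⟩ := step_replicator hs
    exact .par (.guarded b) .replicator
  | par hJ hY ih =>
    cases hs with
    | parL h => exact (hJ.step h).2 ▸ .par .nil hY
    | parR h => exact .par hJ (ih h)
    | commR h₁ h₂ => exact (hJ.step h₁).2 ▸ .par .nil (ih h₂)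
    | commL h₁ | closeL h₁ | closeR h₁ => cases (hJ.step h₁).1

-- `nil_par` and `guarded` absorb what `q`'s answers leave behind: the `0` of a fired guard, and a dead
-- guard `[5=3]ū4` where `p` has `[4=3]ū4`.
inductive UpToFour : Term → Term → Prop
  | refl {P : Term} : IsProc P → UpToFour P P
  | symm {P Q : Term} : UpToFour P Q → UpToFour Q P
  | nil_par {P : Term} : IsProc P → UpToFour (.par .nil P) P
  | guarded {b c : Name} : b ≠ 3 → c ≠ 3 → UpToFour (guardedFour b) (guardedFour c)
  | choice {Y : Term} : Replicating Y → UpToFour (.par sum345 Y) (.par sum35 Y)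
  | par {L M P Q : Term} : UpToFour L M → UpToFour P Q → UpToFour (.par L P) (.par M Q)
  | res {P Q : Term} (c : Name) : UpToFour P Q → UpToFour (.res c P) (.res c Q)

theorem Replicating.inp_upToFour {Y Y₁ : Term} {b : Name} (h : Replicating Y)
    (hs : Step Y (.lab (.inp 1 b)) Y₁) (hb : b ≠ 3) {c : Name} (hc : c ≠ 3) :
    ∃ Y₂, Step Y (.lab (.inp 1 c)) Y₂ ∧ UpToFour Y₂ Y₁ := by
  induction h generalizing Y₁ with
  | replicator =>
    obtain ⟨b', hb', rfl⟩ := step_replicator hs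
    cases hb'
    exact ⟨_, .repInpStep c, .par (.guarded hc hb) (.refl Replicating.replicator.closed)⟩
  | par hJ hY ih =>
    cases hs with
    | parL h => cases (hJ.step h).1
    | parR h =>
      obtain ⟨Y₂, hY₂, hR⟩ := ih h
      exact ⟨_, .parR hY₂, .par (.refl hJ.closed) hR⟩

theorem Replicating.release {Y : Term} (h : Replicating Y) :
    ∃ Y₁ Y₂, Step Y (.lab (.inp 1 3)) Y₁ ∧ Step Y₁ (.lab (.out 1 4)) Y₂ ∧ UpToFour Y₂ Y := by
  induction h with
  | replicator =>
    exact ⟨_, _, .repInpStep 3, .parL (.matStep (.out 0 rfl)),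
      .nil_par Replicating.replicator.closed⟩
  | par hJ _ ih =>
    obtain ⟨Y₁, Y₂, h₁, h₂, hR⟩ := ih
    exact ⟨_, _, .parR h₁, .parR h₂, .par (.refl hJ.closed) hR⟩

namespace UpToFour

-- A τ-step is answered by at least one τ-step, which makes the relation codivergent.
def Answers (S T : Term) : Prop :=
  (∀ T', Tau T T' → ∃ S', TransGen Tau S S' ∧ UpToFour S' T') ∧
  ∀ ℓ T', Step T (.lab ℓ) T' → ∃ S₁ S', WeakTau S S₁ ∧ Step S₁ (.lab ℓ) S' ∧ UpToFour S' T'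

theorem answers_refl {P : Term} (hP : IsProc P) : Answers P P :=
  ⟨fun P' h => ⟨P', .single h, refl (h.closed hP)⟩,
   fun _ P' h => ⟨P, P', .refl P, h, refl (h.closed hP)⟩⟩

theorem answers_of_stuck {S T : Term} (hT : ∀ μ T', ¬ Step T μ T') : Answers S T :=
  ⟨fun T' h => absurd h (hT _ T'), fun _ T' h => absurd h (hT _ T')⟩

theorem answers_nil_par {P : Term} (hP : IsProc P) :
    Answers (.par .nil P) P ∧ Answers P (.par .nil P) := by
  refine ⟨⟨fun P' h => ⟨_, .single (.parR h), nil_par (h.closed hP)⟩,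
      fun _ P' h => ⟨_, _, .refl _, .parR h, nil_par (h.closed hP)⟩⟩,
    ⟨fun T' h => ?_, fun _ T' h => ?_⟩⟩
  · cases h with
    | parR h => exact ⟨_, .single h, (nil_par (h.closed hP)).symm⟩
    | parL h | commL h | commR h | closeL h | closeR h => cases h
  · cases h with
    | parR h => exact ⟨_, _, .refl _, h, (nil_par (h.closed hP)).symm⟩
    | parL h => cases h

theorem answers_choice {Y : Term} (hY : Replicating Y) :
    Answers (.par sum345 Y) (.par sum35 Y) := by
  refine ⟨fun T' h => ?_, fun ℓ T' h => ?_⟩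
  · cases h with
    | parR h => exact ⟨_, .single (.parR h), choice (hY.step h)⟩
    | commR h₁ h₂ =>
      obtain ⟨rfl, -⟩ := step_sum35 h₁
      exact ⟨_, .single (.commR h₁.sum345_of_sum35 h₂),
        refl (closed_par_iff.2 ⟨rfl, h₂.closed hY.closed⟩)⟩
    | parL h | commL h | closeL h | closeR h => cases h
  · cases h with
    | parR h => exact ⟨_, _, .refl _, .parR h, choice (hY.step h)⟩
    | parL h =>
      obtain ⟨rfl, -⟩ := step_sum35 h
      exact ⟨_, _, .refl _, .parL h.sum345_of_sum35, refl (closed_par_iff.2 ⟨rfl, hY.closed⟩)⟩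

theorem answers_choice_symm {Y : Term} (hY : Replicating Y) :
    Answers (.par sum35 Y) (.par sum345 Y) := by
  refine ⟨fun T' h => ?_, fun ℓ T' h => ?_⟩
  · cases h with
    | parR h => exact ⟨_, .single (.parR h), (choice (hY.step h)).symm⟩
    | commR h₁ h₂ =>
      rcases step_sum345 h₁ with hμ | h₁
      · cases hμ
        obtain ⟨Y₂, hY₂, hR⟩ := hY.inp_upToFour h₂ (by decide) (c := 5) (by decide)
        cases h₁ with
        | out _ _ => exact ⟨_, .single (.commR (Step.out 1 rfl) hY₂), .par (.refl rfl) hR⟩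
      · obtain ⟨rfl, -⟩ := step_sum35 h₁
        exact ⟨_, .single (.commR h₁ h₂), refl (closed_par_iff.2 ⟨rfl, h₂.closed hY.closed⟩)⟩
    | parL h | commL h | closeL h | closeR h => cases h
  · cases h with
    | parR h => exact ⟨_, _, .refl _, .parR h, (choice (hY.step h)).symm⟩
    | parL h =>
      rcases step_sum345 h with hμ | h
      · cases hμ
        obtain ⟨Y₁, Y₂, h₁, h₂, hR⟩ := hY.release
        cases h with
        | out _ _ =>
          exact ⟨_, _, .single (.commR (Step.out 0 rfl) h₁), .parR h₂, .par (.refl rfl) hR⟩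
      · obtain ⟨rfl, -⟩ := step_sum35 h
        exact ⟨_, _, .refl _, .parL h, refl (closed_par_iff.2 ⟨rfl, hY.closed⟩)⟩

theorem answers_par {L M P Q : Term} (hLM : UpToFour L M) (hPQ : UpToFour P Q)
    (h₁ : Answers L M) (h₂ : Answers P Q) : Answers (.par L P) (.par M Q) := by
  obtain ⟨τ₁, ℓ₁⟩ := h₁
  obtain ⟨τ₂, ℓ₂⟩ := h₂
  refine ⟨fun T' hT' => ?_, fun ℓ T' hT' => ?_⟩
  · cases hT' with
    | parR h =>
      obtain ⟨P', hP', hR⟩ := τ₂ _ h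
      exact ⟨_, TransGen.lift (Term.par L) (fun _ _ => Step.parR) _ _ hP', hLM.par hR⟩
    | parL h =>
      obtain ⟨L', hL', hR⟩ := τ₁ _ h
      exact ⟨_, TransGen.lift (Term.par · P) (fun _ _ => Step.parL) _ _ hL', hR.par hPQ⟩
    | commL h₁ h₂ | commR h₁ h₂ | closeL h₁ h₂ | closeR h₁ h₂ =>
      obtain ⟨L₁, L', hL₁, hL', hR₁⟩ := ℓ₁ _ _ h₁
      obtain ⟨P₁, P', hP₁, hP', hR₂⟩ := ℓ₂ _ _ h₂
      have hw : WeakTau (.par L P) (.par L₁ P₁) := (hL₁.par_left P).trans (hP₁.par_right L₁)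
      first
      | exact ⟨_, .tail' hw (.commL hL' hP'), hR₁.par hR₂⟩
      | exact ⟨_, .tail' hw (.commR hL' hP'), hR₁.par hR₂⟩
      | exact ⟨_, .tail' hw (.closeL hL' hP'), (hR₁.par hR₂).res _⟩
      | exact ⟨_, .tail' hw (.closeR hL' hP'), (hR₁.par hR₂).res _⟩
  · cases hT' with
    | parR h =>
      obtain ⟨P₁, P', hP₁, hP', hR⟩ := ℓ₂ _ _ h
      exact ⟨_, _, hP₁.par_right L, .parR hP', hLM.par hR⟩
    | parL h =>
      obtain ⟨L₁, L', hL₁, hL', hR⟩ := ℓ₁ _ _ h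
      exact ⟨_, _, hL₁.par_left P, .parL hL', hR.par hPQ⟩

theorem answers_res {P Q : Term} (c : Name) (h : Answers P Q) : Answers (.res c P) (.res c Q) := by
  obtain ⟨hτ, hℓ⟩ := h
  refine ⟨fun T' hT' => ?_, fun ℓ T' hT' => ?_⟩
  · cases hT' with
    | resStep h =>
      obtain ⟨P', hP', hR⟩ := hτ _ h
      exact ⟨_, TransGen.lift (Term.res c) (fun _ _ => Tau.res c) _ _ hP', hR.res c⟩
  · cases hT' with
    | resStep h hc =>
      obtain ⟨P₁, P', hP₁, hP', hR⟩ := hℓ _ _ h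
      exact ⟨_, _, hP₁.res c, .resStep hP' hc, hR.res c⟩
    | open_ h =>
      obtain ⟨P₁, P', hP₁, hP', hR⟩ := hℓ _ _ h
      exact ⟨_, _, hP₁.res c, .open_ hP', hR⟩

theorem answers {S T : Term} (h : UpToFour S T) : Answers S T ∧ Answers T S := by
  induction h with
  | refl hP => exact ⟨answers_refl hP, answers_refl hP⟩
  | symm _ ih => exact ih.symm
  | nil_par hP => exact answers_nil_par hP
  | guarded hb hc =>
    exact ⟨answers_of_stuck fun _ _ h => hc (step_guardedFour h).1,
      answers_of_stuck fun _ _ h => hb (step_guardedFour h).1⟩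
  | choice hY => exact ⟨answers_choice hY, answers_choice_symm hY⟩
  | par hLM hPQ ih₁ ih₂ =>
    exact ⟨answers_par hLM hPQ ih₁.1 ih₂.1, answers_par hLM.symm hPQ.symm ih₁.2 ih₂.2⟩
  | res c _ ih => exact ⟨answers_res c ih.1, answers_res c ih.2⟩

theorem onProc : OnProc UpToFour := by
  intro P Q h
  induction h with
  | refl hP => exact ⟨hP, hP⟩
  | symm _ ih => exact ih.symm
  | nil_par hP => exact ⟨closed_par_iff.2 ⟨rfl, hP⟩, hP⟩
  | guarded => constructor <;> simp [IsProc, Closed, Term.fvar, NV.vars]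
  | choice hY =>
    exact ⟨closed_par_iff.2 ⟨by simp [Closed, Term.fvar, NV.vars], hY.closed⟩,
      closed_par_iff.2 ⟨by simp [Closed, Term.fvar, NV.vars], hY.closed⟩⟩
  | par _ _ ih₁ ih₂ => exact ⟨closed_par_iff.2 ⟨ih₁.1, ih₂.1⟩, closed_par_iff.2 ⟨ih₁.2, ih₂.2⟩⟩
  | res c _ ih => exact ih

theorem goodWeak : GoodWeak UpToFour := by
  refine ⟨onProc, fun P hP => refl hP, ?_, ⟨fun _ _ _ _ => par, fun _ _ => res⟩, ?_, ?_⟩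
  · refine equipollent_of_transfer (fun _ _ => symm) (fun S T T' h hT => ?_) fun S T ℓ T' h hT => ?_
    · obtain ⟨S', hS', hR⟩ := (answers h).1.1 T' hT
      exact ⟨S', hS'.to_reflTransGen, hR⟩
    · obtain ⟨S₁, S', hS₁, hS', -⟩ := (answers h).1.2 ℓ T' hT
      exact .of_weakTau hS₁ (.of_step hS')
  · intro P Q h
    refine ⟨fun f hf hτ => ?_, fun f hf hτ => ?_⟩
    · obtain ⟨P', hP', hR⟩ := (answers h).1.1 (f 1) (hf ▸ hτ 0)
      exact ⟨1, le_rfl, P', .of_transGen hP', hR⟩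
    · obtain ⟨Q', hQ', hR⟩ := (answers h).2.1 (f 1) (hf ▸ hτ 0)
      exact ⟨1, le_rfl, Q', .of_transGen hQ', hR⟩
  · intro P Q h
    refine ⟨fun Q' hQ' => ?_, fun P' hP' => ?_⟩
    · obtain ⟨P', hP', hR⟩ := (answers h).1.1 Q' hQ'
      exact ⟨P', hP'.to_reflTransGen, hR⟩
    · obtain ⟨Q', hQ', hR⟩ := (answers h).2.1 P' hP'
      exact ⟨Q', hQ'.to_reflTransGen, hR.symm⟩

end UpToFour

theorem weakEq_procP_procQ : WeakEq procP procQ := ⟨_, UpToFour.goodWeak, .choice .replicator⟩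

def InputOnly (P : Term) : Prop := ∀ μ Z, Step P μ Z → ∃ a b, μ = .lab (.inp a b)

def Diverges (P : Term) : Prop := ∃ f : ℕ → Term, f 0 = P ∧ TauSeq f

def AlwaysDiverges (P : Term) : Prop := ∀ Q, WeakTau P Q → Diverges Q

def Terminates (P : Term) : Prop := Acc (fun Q P => Tau P Q) P

theorem InputOnly.not_tau {P Q : Term} (h : InputOnly P) : ¬ Tau P Q := fun hτ => by
  obtain ⟨_, _, hμ⟩ := h _ _ hτ
  cases hμ

theorem InputOnly.terminates {P : Term} (h : InputOnly P) : Terminates P :=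
  ⟨_, fun _ hτ => absurd hτ h.not_tau⟩

theorem InputOnly.of_stuck {P : Term} (h : ∀ μ Z, ¬ Step P μ Z) : InputOnly P :=
  fun μ Z hs => absurd hs (h μ Z)

theorem InputOnly.par {A B : Term} (hA : InputOnly A) (hB : InputOnly B) :
    InputOnly (.par A B) := by
  intro μ Z h
  cases h with
  | parL h => exact hA _ _ h
  | parR h => exact hB _ _ h
  | commL _ h | closeL _ h => obtain ⟨_, _, hμ⟩ := hB _ _ h; cases hμ
  | commR h _ | closeR h _ => obtain ⟨_, _, hμ⟩ := hA _ _ h; cases hμ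

theorem Terminates.weakTau {P Q : Term} (hP : Terminates P) (h : WeakTau P Q) : Terminates Q := by
  induction h with
  | refl => exact hP
  | tail _ hτ ih => exact ih.inv hτ

theorem diverges_of_tauSeq {f : ℕ → Term} (hf : TauSeq f) (k : ℕ) : Diverges (f k) :=
  ⟨fun i => f (k + i), rfl, fun i => hf (k + i)⟩

theorem Diverges.par_left {P : Term} (B : Term) : Diverges P → Diverges (.par P B)
  | ⟨f, hf, hτ⟩ => ⟨fun i => .par (f i) B, hf ▸ rfl, fun i => .parL (hτ i)⟩

section Refutation

variable {R : PRel}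

theorem not_rel_of_terminates_of_diverges (hcod : Codivergent R) {P Q : Term} (hP : Terminates P)
    (hQ : Diverges Q) : ¬ R P Q ∧ ¬ R Q P := by
  -- Codivergence keeps pushing the terminating side forward, which well-foundedness forbids.
  have key : ∀ P, Acc (TransGen fun Q P => Tau P Q) P → ∀ Q, Diverges Q → ¬ R P Q := by
    intro P hP
    induction hP with
    | intro P _ ih =>
      rintro Q ⟨f, rfl, hf⟩ hPQ
      obtain ⟨k, -, P', hP', hR⟩ := (hcod _ _ hPQ).1 f rfl hf
      exact ih P' (TransGen.swap _ _ (TransGen.head'_iff.2 hP')) _ (diverges_of_tauSeq hf k) hR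
  refine ⟨key P hP.transGen Q hQ, fun hQP => ?_⟩
  obtain ⟨f, rfl, hf⟩ := hQ
  obtain ⟨k, -, P', hP', hR⟩ := (hcod _ _ hQP).2 f rfl hf
  exact key P' (hP.weakTau hP'.weakTau).transGen _ (diverges_of_tauSeq hf k) hR

theorem not_rel_of_tau_diverges (hcod : Codivergent R) (hbis : WeakBisim R) {P Q Q' : Term}
    (hP : Terminates P) (hQ : Tau Q Q') (hQ' : Diverges Q') : ¬ R P Q ∧ ¬ R Q P := by
  constructor
  · intro h
    obtain ⟨P', hP', hR⟩ := (hbis P Q h).1 Q' hQ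
    exact (not_rel_of_terminates_of_diverges hcod (hP.weakTau hP') hQ').1 hR
  · intro h
    obtain ⟨P', hP', hR⟩ := (hbis Q P h).2 Q' hQ
    exact (not_rel_of_terminates_of_diverges hcod (hP.weakTau hP') hQ').2 hR

theorem not_rel_of_tau_terminates (hcod : Codivergent R) (hbis : WeakBisim R) {P Q Q' : Term}
    (hP : AlwaysDiverges P) (hQ : Tau Q Q') (hQ' : Terminates Q') : ¬ R P Q ∧ ¬ R Q P := by
  constructor
  · intro h
    obtain ⟨P', hP', hR⟩ := (hbis P Q h).1 Q' hQ
    exact (not_rel_of_terminates_of_diverges hcod hQ' (hP P' hP')).2 hR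
  · intro h
    obtain ⟨P', hP', hR⟩ := (hbis Q P h).2 Q' hQ
    exact (not_rel_of_terminates_of_diverges hcod hQ' (hP P' hP')).1 hR

end Refutation

-- `Ω = (9)(!9̄8 | !9(x))` after `n` internal steps, each of which leaves a `0` on both sides.
def omegaOut : ℕ → Term
  | 0 => .repOut (.nm 9) (.nm 8) .nil
  | n + 1 => .par .nil (omegaOut n)

def omegaIn : ℕ → Term
  | 0 => .repInp (.nm 9) 0 .nil
  | n + 1 => .par .nil (omegaIn n)

def omega (n : ℕ) : Term := .res 9 (.par (omegaOut n) (omegaIn n))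

theorem step_omegaOut {n : ℕ} {μ : Act} {Z : Term} :
    Step (omegaOut n) μ Z ↔ μ = .lab (.out 9 8) ∧ Z = omegaOut (n + 1) := by
  induction n generalizing μ Z with
  | zero =>
    constructor
    · rintro ⟨⟩; exact ⟨rfl, rfl⟩
    · rintro ⟨rfl, rfl⟩; exact .repOutStep
  | succ n ih =>
    constructor
    · intro h
      cases h with
      | parR h => obtain ⟨rfl, rfl⟩ := ih.1 h; exact ⟨rfl, rfl⟩
      | parL h | commL h | commR h | closeL h | closeR h => cases h
    · rintro ⟨rfl, rfl⟩; exact .parR (ih.2 ⟨rfl, rfl⟩)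

theorem step_omegaIn {n : ℕ} {μ : Act} {Z : Term} :
    Step (omegaIn n) μ Z ↔ ∃ b, μ = .lab (.inp 9 b) ∧ Z = omegaIn (n + 1) := by
  induction n generalizing μ Z with
  | zero =>
    constructor
    · rintro ⟨⟩; exact ⟨_, rfl, rfl⟩
    · rintro ⟨b, rfl, rfl⟩; exact .repInpStep b
  | succ n ih =>
    constructor
    · intro h
      cases h with
      | parR h => obtain ⟨b, rfl, rfl⟩ := ih.1 h; exact ⟨b, rfl, rfl⟩
      | parL h | commL h | commR h | closeL h | closeR h => cases h
    · rintro ⟨b, rfl, rfl⟩; exact .parR (ih.2 ⟨b, rfl, rfl⟩)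

theorem step_omega {n : ℕ} {μ : Act} {Z : Term} :
    Step (omega n) μ Z ↔ μ = .tau ∧ Z = omega (n + 1) := by
  constructor
  · intro h
    cases h with
    | resStep h hc =>
      cases h with
      | parL h => obtain ⟨rfl, -⟩ := step_omegaOut.1 h; simp [Act.names, Label.names] at hc
      | parR h => obtain ⟨_, rfl, -⟩ := step_omegaIn.1 h; simp [Act.names, Label.names] at hc
      | commL h₁ => cases (step_omegaOut.1 h₁).1
      | commR h₁ h₂ =>
        obtain ⟨-, rfl⟩ := step_omegaOut.1 h₁
        obtain ⟨_, -, rfl⟩ := step_omegaIn.1 h₂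
        exact ⟨rfl, rfl⟩
      | closeL h₁ | closeR h₁ => cases (step_omegaOut.1 h₁).1
    | open_ h =>
      cases h with
      | parL h => cases (step_omegaOut.1 h).1
      | parR h => obtain ⟨_, ⟨⟩, -⟩ := step_omegaIn.1 h
  · rintro ⟨rfl, rfl⟩
    exact Tau.res 9 (.commR (step_omegaOut.2 ⟨rfl, rfl⟩) (step_omegaIn.2 ⟨8, rfl, rfl⟩))

abbrev tester : Term := .inp (.nm 1) 0 1 (fun _ => .mat (.vr 0) (.nm 4) (omega 0))

abbrev testerAfter (b : Name) : Term := .mat (.nm b) (.nm 4) (omega 0)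

theorem closed_tester : Closed tester := by
  simp [Closed, Term.fvar, NV.vars, omega, omegaOut, omegaIn]

def omegaRun : ℕ → Term
  | 0 => testerAfter 4
  | n + 1 => omega (n + 1)

theorem step_omegaRun {n : ℕ} {μ : Act} {Z : Term} :
    Step (omegaRun n) μ Z ↔ μ = .tau ∧ Z = omegaRun (n + 1) := by
  cases n with
  | zero =>
    constructor
    · intro h
      cases h with | matStep h => exact step_omega.1 h
    · rintro ⟨rfl, rfl⟩
      exact .matStep (step_omega.2 ⟨rfl, rfl⟩)
  | succ n => exact step_omega

def withOmega (A : Term) (n : ℕ) : Term := .par A (omegaRun n)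

theorem tau_withOmega (A : Term) (n : ℕ) : Tau (withOmega A n) (withOmega A (n + 1)) :=
  .parR (step_omegaRun.2 ⟨rfl, rfl⟩)

theorem diverges_withOmega (A : Term) (n : ℕ) : Diverges (withOmega A n) :=
  diverges_of_tauSeq (tau_withOmega A) n

theorem InputOnly.tau_withOmega {A Z : Term} {n : ℕ} (hA : InputOnly A)
    (h : Tau (withOmega A n) Z) : Z = withOmega A (n + 1) := by
  cases h with
  | parR h => rw [(step_omegaRun.1 h).2]; rfl
  | parL h => exact absurd h hA.not_tau
  | commL _ h | closeL _ h => cases (step_omegaRun.1 h).1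
  | commR h | closeR h => obtain ⟨_, _, ⟨⟩⟩ := hA _ _ h

theorem InputOnly.alwaysDiverges_withOmega {A : Term} (hA : InputOnly A) (n : ℕ) :
    AlwaysDiverges (withOmega A n) := by
  suffices ∀ Z, WeakTau (withOmega A n) Z → ∃ m, Z = withOmega A m by
    intro Z hZ
    obtain ⟨m, rfl⟩ := this Z hZ
    exact diverges_withOmega A m
  intro Z hZ
  induction hZ with
  | refl => exact ⟨n, rfl⟩
  | tail _ h ih =>
    obtain ⟨m, rfl⟩ := ih
    exact ⟨m + 1, hA.tau_withOmega h⟩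

abbrev testP : Term := .par procP tester

abbrev testQ : Term := .par procQ tester

-- States named after the last communication: a value `b` sent by the sum, or the `ū4` released by
-- the guard `[3=3]ū4`.
abbrev sentToReplicator (b : Name) : Term :=
  .par (.par .nil (.par (guardedFour b) replicator)) tester

abbrev sentToTester (b : Name) : Term := .par (.par .nil replicator) (testerAfter b)

abbrev releasedToReplicator : Term :=
  .par (.par .nil (.par .nil (.par (guardedFour 4) replicator))) tester

abbrev releasedToTester (n : ℕ) : Term := withOmega (.par .nil (.par .nil replicator)) n

theorem inputOnly_nil : InputOnly .nil := .of_stuck fun _ _ => step_nil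

theorem inputOnly_replicator : InputOnly replicator := fun _ _ h =>
  let ⟨b, hμ, _⟩ := step_replicator h
  ⟨1, b, hμ⟩

theorem inputOnly_tester : InputOnly tester := by
  rintro _ _ ⟨⟩
  exact ⟨_, _, rfl⟩

theorem inputOnly_guardedFour {b : Name} (hb : b ≠ 3) : InputOnly (guardedFour b) :=
  .of_stuck fun _ _ h => hb (step_guardedFour h).1

theorem inputOnly_testerAfter {b : Name} (hb : b ≠ 4) : InputOnly (testerAfter b) :=
  .of_stuck fun _ _ h => by cases h; exact hb rfl

theorem inputOnly_sentToReplicator {b : Name} (hb : b ≠ 3) : InputOnly (sentToReplicator b) :=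
  (inputOnly_nil.par ((inputOnly_guardedFour hb).par inputOnly_replicator)).par inputOnly_tester

theorem inputOnly_sentToTester {b : Name} (hb : b ≠ 4) : InputOnly (sentToTester b) :=
  (inputOnly_nil.par inputOnly_replicator).par (inputOnly_testerAfter hb)

theorem inputOnly_released : InputOnly (.par .nil (.par .nil replicator)) :=
  inputOnly_nil.par (inputOnly_nil.par inputOnly_replicator)

theorem inputOnly_releasedToReplicator : InputOnly releasedToReplicator :=
  (inputOnly_nil.par (inputOnly_nil.par ((inputOnly_guardedFour (by decide)).par
    inputOnly_replicator))).par inputOnly_tester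

theorem tau_testQ {Z : Term} (h : Tau testQ Z) : Z = sentToReplicator 3 ∨ InputOnly Z := by
  cases h with
  | parL h =>
    cases h with
    | commR h₁ h₂ =>
      obtain ⟨rfl, b, hb, hμ⟩ := step_sum35 h₁
      cases hμ
      obtain ⟨_, hμ, rfl⟩ := step_replicator h₂
      cases hμ
      rcases hb with rfl | rfl
      exacts [.inl rfl, .inr (inputOnly_sentToReplicator (by decide))]
    | parR h => obtain ⟨_, ⟨⟩, -⟩ := step_replicator h
    | parL h | commL h | closeL h | closeR h => cases h
  | commR h₁ h₂ =>
    cases h₂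
    cases h₁ with
    | parL h =>
      obtain ⟨rfl, b, hb, hμ⟩ := step_sum35 h
      cases hμ
      exact .inr (inputOnly_sentToTester (by rcases hb with rfl | rfl <;> decide))
    | parR h => obtain ⟨_, ⟨⟩, -⟩ := step_replicator h
  | parR h | commL _ h | closeL _ h => cases h
  | closeR h =>
    cases h with
    | parL h => cases h
    | parR h => obtain ⟨_, ⟨⟩, -⟩ := step_replicator h

theorem tau_sentToReplicator_three {Z : Term} (h : Tau (sentToReplicator 3) Z) :
    Z = releasedToReplicator ∨ Z = releasedToTester 0 := by
  cases h with
  | parL h =>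
    cases h with
    | parR h =>
      cases h with
      | commR h₁ h₂ =>
        obtain ⟨-, ⟨⟩, rfl⟩ := step_guardedFour h₁
        obtain ⟨_, ⟨⟩, rfl⟩ := step_replicator h₂
        exact .inl rfl
      | parL h => cases (step_guardedFour h).2.1
      | parR h => obtain ⟨_, ⟨⟩, -⟩ := step_replicator h
      | commL h | closeL h | closeR h => cases (step_guardedFour h).2.1
    | parL h | commL h | commR h | closeL h | closeR h => cases h
  | commR h₁ h₂ =>
    cases h₂
    cases h₁ with
    | parR h =>
      cases h with
      | parL h =>
        obtain ⟨-, ⟨⟩, rfl⟩ := step_guardedFour h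
        exact .inr rfl
      | parR h => obtain ⟨_, ⟨⟩, -⟩ := step_replicator h
    | parL h => cases h
  | parR h | commL _ h | closeL _ h => cases h
  | closeR h =>
    cases h with
    | parL h => cases h
    | parR h =>
      cases h with
      | parL h => cases (step_guardedFour h).2.1
      | parR h => obtain ⟨_, ⟨⟩, -⟩ := step_replicator h

theorem reach_sentToReplicator_three {Z : Term} (h : WeakTau (sentToReplicator 3) Z) :
    Z = sentToReplicator 3 ∨ Z = releasedToReplicator ∨ ∃ m, Z = releasedToTester m := by
  induction h with
  | refl => exact .inl rfl
  | tail _ h ih =>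
    rcases ih with rfl | rfl | ⟨m, rfl⟩
    · rcases tau_sentToReplicator_three h with rfl | rfl
      exacts [.inr (.inl rfl), .inr (.inr ⟨0, rfl⟩)]
    · exact absurd h inputOnly_releasedToReplicator.not_tau
    · exact .inr (.inr ⟨m + 1, inputOnly_released.tau_withOmega h⟩)

theorem reach_testQ {Z : Term} (h : WeakTau testQ Z) :
    Z = testQ ∨ InputOnly Z ∨ WeakTau (sentToReplicator 3) Z := by
  induction h with
  | refl => exact .inl rfl
  | tail _ h ih =>
    rcases ih with rfl | hZ | hZ
    · rcases tau_testQ h with rfl | hZ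
      exacts [.inr (.inr (.refl _)), .inr (.inl hZ)]
    · exact absurd h hZ.not_tau
    · exact .inr (.inr (hZ.tail h))

theorem terminates_sentToTester_three_par_outFour : Terminates (.par (sentToTester 3) outFour) := by
  have hin : InputOnly (sentToTester 3) := inputOnly_sentToTester (by decide)
  -- The only internal step hands `4` to the replicator, and the released `[4=3]ū4` is dead.
  refine ⟨_, fun Z h => ?_⟩
  cases h with
  | commL h₁ h₂ =>
    cases h₂ with
    | out _ h =>
      cases h
      cases h₁ with
      | parL h =>
        cases h with
        | parR h =>
          obtain ⟨_, hμ, rfl⟩ := step_replicator h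
          cases hμ
          have hJ := inputOnly_nil.par ((inputOnly_guardedFour (b := 4) (by decide)).par
            inputOnly_replicator)
          exact ((hJ.par (inputOnly_testerAfter (by decide))).par inputOnly_nil).terminates
        | parL h => cases h
      | parR h => cases h
  | parL h => exact absurd h hin.not_tau
  | commR h | closeR h => obtain ⟨_, _, ⟨⟩⟩ := hin _ _ h
  | parR h | closeL _ h => cases h

section TesterGame

variable {R : PRel}

theorem not_rel_testP_releasedToTester (hcod : Codivergent R) (hbis : WeakBisim R) (m : ℕ) :
    ¬ R testP (releasedToTester m) :=
  (not_rel_of_tau_terminates hcod hbis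
    (inputOnly_released.alwaysDiverges_withOmega m)
    (Step.parL (.commR (Step.out 2 rfl) (.repInpStep 5)) : Tau testP (sentToReplicator 5))
    (inputOnly_sentToReplicator (by decide)).terminates).2

theorem not_rel_sentToTester_three_releasedToReplicator (hcod : Codivergent R) (hbis : WeakBisim R)
    (hrefl : ReflProc R) (hext : Extensional R) : ¬ R (sentToTester 3) releasedToReplicator := by
  -- Both sides are stable; an output `ū4` next to them reaches the tester only on the right.
  intro h
  have hR := hext.1 _ _ _ _ h (hrefl outFour (by simp [IsProc, Closed, Term.fvar, NV.vars]))
  have hτ : Tau (.par releasedToReplicator outFour)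
      (.par (withOmega (.par .nil (.par .nil (.par (guardedFour 4) replicator))) 0) .nil) :=
    .commL (.parR (Step.inp 0 4)) (Step.out 0 rfl)
  exact (not_rel_of_tau_diverges hcod hbis terminates_sentToTester_three_par_outFour hτ
    ((diverges_withOmega _ 0).par_left _)).1 hR

theorem not_rel_testP_sentToReplicator_three (hcod : Codivergent R) (hbis : WeakBisim R)
    (hrefl : ReflProc R) (hext : Extensional R) : ¬ R testP (sentToReplicator 3) := by
  intro h
  have hτ : Tau testP (sentToTester 3) := .commR (.parL (Step.out 0 rfl)) (Step.inp 0 3)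
  have hterm : Terminates (sentToTester 3) := (inputOnly_sentToTester (by decide)).terminates
  obtain ⟨Q, hQ, hR⟩ := (hbis _ _ h).2 _ hτ
  rcases reach_sentToReplicator_three hQ with rfl | rfl | ⟨m, rfl⟩
  · have hτ' : Tau (sentToReplicator 3) (releasedToTester 0) :=
      .commR (.parR (.parL (.matStep (Step.out 0 rfl)))) (Step.inp 0 4)
    exact (not_rel_of_tau_diverges hcod hbis hterm hτ' (diverges_withOmega _ 0)).1 hR
  · exact not_rel_sentToTester_three_releasedToReplicator hcod hbis hrefl hext hR
  · exact (not_rel_of_terminates_of_diverges hcod hterm (diverges_withOmega _ m)).1 hR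

theorem eq_releasedToTester_of_rel (hcod : Codivergent R) (hbis : WeakBisim R) {Q : Term}
    (hQ : WeakTau testQ Q) (h : R (sentToTester 4) Q) : ∃ m, Q = releasedToTester m := by
  have hdiv : AlwaysDiverges (sentToTester 4) :=
    (inputOnly_nil.par inputOnly_replicator).alwaysDiverges_withOmega 0
  rcases reach_testQ hQ with rfl | hQ | hQ
  · exact absurd h (not_rel_of_tau_terminates hcod hbis hdiv
      (Step.parL (.commR (Step.out 1 rfl) (.repInpStep 5)) : Tau testQ (sentToReplicator 5))
      (inputOnly_sentToReplicator (by decide)).terminates).1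
  · exact absurd h (not_rel_of_terminates_of_diverges hcod hQ.terminates (hdiv _ (.refl _))).2
  · rcases reach_sentToReplicator_three hQ with rfl | rfl | hm
    · exact absurd h (not_rel_of_tau_terminates hcod hbis hdiv
        (Step.parL (.parR (.commR (.matStep (Step.out 0 rfl)) (.repInpStep 4))))
        inputOnly_releasedToReplicator.terminates).1
    · exact absurd h (not_rel_of_terminates_of_diverges hcod
        inputOnly_releasedToReplicator.terminates (hdiv _ (.refl _))).2
    · exact hm

end TesterGame

theorem not_absEq_procP_procQ : ¬ AbsEq procP procQ := by
  rintro ⟨R, ⟨-, hrefl, -, hext, hcod, hbis⟩, hPQ⟩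
  have hwb := hbis.weakBisim
  have hR : R testP testQ := hext.1 _ _ _ _ hPQ (hrefl tester closed_tester)
  have hτ : Tau testP (sentToTester 4) := .commR (.parL (Step.out 1 rfl)) (Step.inp 0 4)
  rcases (hbis _ _ hR).2 _ hτ with ⟨Q, hQ, hPQ, hXQ⟩ | ⟨Q', Q, hQ', hPQ', hτQ, hXQ⟩
  · obtain ⟨m, rfl⟩ := eq_releasedToTester_of_rel hcod hwb hQ hXQ
    exact not_rel_testP_releasedToTester hcod hwb m hPQ
  · obtain ⟨m, rfl⟩ := eq_releasedToTester_of_rel hcod hwb (hQ'.tail hτQ) hXQ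
    rcases reach_testQ hQ' with rfl | hQ' | hQ'
    · rcases tau_testQ hτQ with h | h
      · cases h
      · exact h.not_tau (tau_withOmega _ m)
    · exact hQ'.not_tau hτQ
    · rcases reach_sentToReplicator_three hQ' with rfl | rfl | ⟨k, rfl⟩
      · exact not_rel_testP_sentToReplicator_three hcod hwb hrefl hext hPQ'
      · exact inputOnly_releasedToReplicator.not_tau hτQ
      · exact not_rel_testP_releasedToTester hcod hwb k hPQ'

/-- the inclusions =ˢ ⊆ = ⊆ =ʷ hold and both are strict. -/
theorem strong_abs_weak_strict_inclusions :
    (∀ P Q : Term, StrongEq P Q → AbsEq P Q) ∧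
    (∀ P Q : Term, AbsEq P Q → WeakEq P Q) ∧
    (∃ P Q : Term, AbsEq P Q ∧ ¬ StrongEq P Q) ∧
    (∃ P Q : Term, WeakEq P Q ∧ ¬ AbsEq P Q) :=
  ⟨fun _ _ => StrongEq.absEq, fun _ _ => AbsEq.weakEq,
    ⟨.nil, tauNil, absEq_nil_tauNil, not_strongEq_nil_tauNil⟩,
    ⟨procP, procQ, weakEq_procP_procQ, not_absEq_procP_procQ⟩⟩
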